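/- Let k ≥ 1, n ≥ 1 be integers and for t ∈ ℝ let a_j(t) be the Fourier coefficients of e^{t/z}(1+z)^k. At every real t₀ with D_n(t₀) := det T_n(t₀) ≠ 0, the function t ↦ Ũ⁺_n(t) is differentiable and its derivative equals φ(t₀) := 1 − U⁻_n(t₀)·Ũ⁻_n(t₀), where Ũ⁺_n(t) and Ũ⁻_n(t) are the first and last components of (T_n(t)ᵀ)^{−1} ã⁺(t), and U⁻_n(t) is the last component of T_n(t)^{−1} a⁺(t). -/

import Mathlib

/-!
Write `T = T_n(t)`, `X = (Tᵀ)⁻¹ ã⁺` and `y = T⁻¹ a⁺`. Since `a_j' = a_{j+1}`, differentiating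
`Tᵀ X = ã⁺` gives `Tᵀ X' = Tᵀ e₀ - T'ᵀ X`, where `T'` is the Toeplitz matrix of the shifted
symbol `j ↦ a_{j+1}`. Shifting the symbol amounts to shifting `X` down by one slot and correcting
the last row: `T'ᵀ X = Tᵀ (Z X) + X_{n-1} r` with `Z` the down-shift and `r_j = a_{n-j}`. By
persymmetry of Toeplitz matrices `r = Tᵀ (J y)`, `J` the reversal, so
`X' = e₀ - Z X - X_{n-1} J y`, whose first entry is `1 - X_{n-1} y_{n-1}`.
-/

open scoped BigOperators
open Matrix

/-- The Fourier coefficients `a_j(t)` of the symbol `e^{t/z} (1+z)^k`. -/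
noncomputable def aCoeff (k : ℕ) (j : ℤ) (t : ℝ) : ℝ :=
  ∑' ℓ : ℕ, t ^ ℓ / (Nat.factorial ℓ : ℝ) *
    (if 0 ≤ j + (ℓ : ℤ) then (Nat.choose k (j + (ℓ : ℤ)).toNat : ℝ) else 0)

/-- The `n × n` Toeplitz matrix `T_n(t)` with `(i,j)` entry `a_{i-j}(t)`. -/
noncomputable def Tn (k n : ℕ) (t : ℝ) : Matrix (Fin n) (Fin n) ℝ :=
  Matrix.of fun i j : Fin n => aCoeff k (((i : ℕ) : ℤ) - ((j : ℕ) : ℤ)) t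

/-- The vector `a⁺(t) = (a_1(t), …, a_n(t))`. -/
noncomputable def aplus (k n : ℕ) (t : ℝ) : Fin n → ℝ :=
  fun i => aCoeff k (((i : ℕ) : ℤ) + 1) t

/-- The vector `ã⁺(t) = (a_{-1}(t), …, a_{-n}(t))`. -/
noncomputable def atplus (k n : ℕ) (t : ℝ) : Fin n → ℝ :=
  fun i => aCoeff k (-(((i : ℕ) : ℤ) + 1)) t

theorem hasDerivAt_pow_succ_div_factorial (ℓ : ℕ) (t : ℝ) :
    HasDerivAt (fun s : ℝ => s ^ (ℓ + 1) / ((ℓ + 1).factorial : ℝ))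
      (t ^ ℓ / (ℓ.factorial : ℝ)) t := by
  refine ((hasDerivAt_pow (ℓ + 1) t).div_const _).congr_deriv ?_
  rw [Nat.factorial_succ]
  push_cast
  field_simp

theorem aCoeff_eq_sum_range (k : ℕ) (j : ℤ) (t : ℝ) {N : ℕ} (hN : k + j.natAbs < N) :
    aCoeff k j t = ∑ ℓ ∈ Finset.range N, t ^ ℓ / (ℓ.factorial : ℝ) *
      (if 0 ≤ j + (ℓ : ℤ) then (Nat.choose k (j + (ℓ : ℤ)).toNat : ℝ) else 0) := by
  refine tsum_eq_sum fun ℓ hℓ => ?_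
  rw [Finset.mem_range, not_lt] at hℓ
  rw [if_pos (by omega), Nat.choose_eq_zero_of_lt (by omega), Nat.cast_zero, mul_zero]

theorem hasDerivAt_aCoeff (k : ℕ) (j : ℤ) (t : ℝ) :
    HasDerivAt (aCoeff k j) (aCoeff k (j + 1) t) t := by
  set N := k + j.natAbs + 2
  have hsum : aCoeff k j = fun s => ∑ ℓ ∈ Finset.range (N + 1), s ^ ℓ / (ℓ.factorial : ℝ) *
      (if 0 ≤ j + (ℓ : ℤ) then (Nat.choose k (j + (ℓ : ℤ)).toNat : ℝ) else 0) :=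
    funext fun s => aCoeff_eq_sum_range k j s (by omega)
  rw [hsum, aCoeff_eq_sum_range k (j + 1) t (N := N) (by omega)]
  have hshift (ℓ : ℕ) : j + ((ℓ + 1 : ℕ) : ℤ) = j + 1 + ℓ := by push_cast; ring
  simp_rw [Finset.sum_range_succ' _ N, pow_zero, hshift]
  exact (HasDerivAt.fun_sum fun ℓ _ =>
    (hasDerivAt_pow_succ_div_factorial ℓ t).mul_const _).add_const _

section MatrixCalculus

variable {𝕜 : Type*} [NontriviallyNormedField 𝕜] {m n : Type*} [Fintype n]

theorem hasDerivAt_mulVec {A : 𝕜 → Matrix m n 𝕜} {A' : Matrix m n 𝕜}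
    {v : 𝕜 → n → 𝕜} {v' : n → 𝕜} {t : 𝕜}
    (hA : ∀ i j, HasDerivAt (fun s => A s i j) (A' i j) t) (hv : HasDerivAt v v' t) :
    HasDerivAt (fun s => A s *ᵥ v s) (A' *ᵥ v t + A t *ᵥ v') t := by
  refine hasDerivAt_pi.2 fun i => ?_
  simp only [mulVec, dotProduct, Pi.add_apply, ← Finset.sum_add_distrib]
  exact HasDerivAt.fun_sum fun j _ => (hA i j).mul (hasDerivAt_pi.1 hv j)

variable [Fintype m] [DecidableEq m]

theorem differentiableAt_det {A : 𝕜 → Matrix m m 𝕜} {t : 𝕜}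
    (hA : ∀ i j, DifferentiableAt 𝕜 (fun s => A s i j) t) :
    DifferentiableAt 𝕜 (fun s => (A s).det) t := by
  simp_rw [det_apply']
  exact DifferentiableAt.fun_sum fun σ _ =>
    (DifferentiableAt.fun_finsetProd fun i _ => hA (σ i) i).const_mul _

theorem differentiableAt_inv_mulVec {A : 𝕜 → Matrix m m 𝕜} {b : 𝕜 → m → 𝕜} {t : 𝕜}
    (hA : ∀ i j, DifferentiableAt 𝕜 (fun s => A s i j) t) (hb : DifferentiableAt 𝕜 b t)
    (hdet : (A t).det ≠ 0) :
    DifferentiableAt 𝕜 (fun s => (A s)⁻¹ *ᵥ b s) t := by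
  have hcramer (s : 𝕜) (i : m) :
      ((A s)⁻¹ *ᵥ b s) i = ((A s).det)⁻¹ * ((A s).updateCol i (b s)).det := by
    rw [inv_def, smul_mulVec, ← cramer_eq_adjugate_mulVec, Pi.smul_apply, cramer_apply,
      Ring.inverse_eq_inv', smul_eq_mul]
  refine differentiableAt_pi.2 fun i => ?_
  simp_rw [hcramer]
  refine ((differentiableAt_det hA).inv hdet).mul (differentiableAt_det fun p q => ?_)
  simp only [updateCol_apply]
  split_ifs
  · exact differentiableAt_pi.1 hb p
  · exact hA p q

theorem hasDerivAt_inv_mulVec {A : 𝕜 → Matrix m m 𝕜} {A' : Matrix m m 𝕜}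
    {b : 𝕜 → m → 𝕜} {b' : m → 𝕜} {t : 𝕜}
    (hA : ∀ i j, HasDerivAt (fun s => A s i j) (A' i j) t) (hb : HasDerivAt b b' t)
    (hdet : (A t).det ≠ 0) :
    HasDerivAt (fun s => (A s)⁻¹ *ᵥ b s) ((A t)⁻¹ *ᵥ (b' - A' *ᵥ ((A t)⁻¹ *ᵥ b t))) t := by
  set x := fun s => (A s)⁻¹ *ᵥ b s
  have hx : HasDerivAt x (deriv x t) t :=
    (differentiableAt_inv_mulVec (fun i j => (hA i j).differentiableAt) hb.differentiableAt
      hdet).hasDerivAt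
  have hsolve : (fun s => A s *ᵥ x s) =ᶠ[nhds t] b := by
    filter_upwards [(differentiableAt_det fun i j => (hA i j).differentiableAt).continuousAt
      |>.eventually_ne hdet] with s hs
    rw [mulVec_mulVec, mul_nonsing_inv _ (isUnit_iff_ne_zero.2 hs), one_mulVec]
  have hderiv : A' *ᵥ x t + A t *ᵥ deriv x t = b' :=
    ((hsolve.hasDerivAt_iff).1 (hasDerivAt_mulVec hA hx)).unique hb
  rwa [← hderiv, add_sub_cancel_left, mulVec_mulVec, nonsing_inv_mul _ (isUnit_iff_ne_zero.2 hdet),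
    one_mulVec]

end MatrixCalculus

namespace Matrix

variable {R : Type*}

def toeplitz (a : ℤ → R) (n : ℕ) : Matrix (Fin n) (Fin n) R :=
  of fun i j => a (((i : ℕ) : ℤ) - ((j : ℕ) : ℤ))

theorem toeplitz_transpose_mulVec_comp_rev [NonUnitalNonAssocSemiring R] (a : ℤ → R) {n : ℕ}
    (v : Fin n → R) :
    (toeplitz a n)ᵀ *ᵥ (v ∘ Fin.rev) = (toeplitz a n *ᵥ v) ∘ Fin.rev := by
  ext j
  simp only [mulVec, dotProduct, Function.comp_apply, transpose_apply, toeplitz, of_apply]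
  rw [← Equiv.sum_comp Fin.revPerm]
  refine Finset.sum_congr rfl fun i _ => ?_
  simp only [Fin.revPerm_apply, Fin.rev_rev, Fin.val_rev]
  congr 2
  omega

theorem toeplitz_transpose_mulVec_single_zero [NonAssocSemiring R] (a : ℤ → R) (n : ℕ) [NeZero n] :
    (toeplitz a n)ᵀ *ᵥ Pi.single 0 1 = fun i : Fin n => a (-((i : ℕ) : ℤ)) := by
  ext i
  simp [toeplitz]

theorem toeplitz_shift_transpose_mulVec [NonUnitalNonAssocSemiring R] (a : ℤ → R) {m : ℕ}
    (x : Fin (m + 1) → R) :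
    (toeplitz (fun j => a (j + 1)) (m + 1))ᵀ *ᵥ x =
      (toeplitz a (m + 1))ᵀ *ᵥ Fin.cons 0 (Fin.init x) +
        fun j : Fin (m + 1) => a ((m : ℤ) + 1 - ((j : ℕ) : ℤ)) * x (Fin.last m) := by
  ext j
  simp only [mulVec, dotProduct, transpose_apply, toeplitz, of_apply, Pi.add_apply]
  rw [Fin.sum_univ_castSucc, Fin.sum_univ_succ]
  simp only [Fin.val_castSucc, Fin.val_last, Fin.val_succ, Fin.cons_zero, Fin.cons_succ, Fin.init,
    mul_zero, zero_add]
  congr 1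
  · exact Finset.sum_congr rfl fun i _ => by push_cast; ring_nf
  · ring_nf

theorem sub_toeplitz_shift_transpose_mulVec [CommRing R] {a : ℤ → R} {m : ℕ}
    {y : Fin (m + 1) → R}
    (hy : toeplitz a (m + 1) *ᵥ y = fun i : Fin (m + 1) => a (((i : ℕ) : ℤ) + 1))
    (x : Fin (m + 1) → R) :
    (fun i : Fin (m + 1) => a (-((i : ℕ) : ℤ))) - (toeplitz (fun j => a (j + 1)) (m + 1))ᵀ *ᵥ x =
      (toeplitz a (m + 1))ᵀ *ᵥ
        (Pi.single 0 1 - Fin.cons 0 (Fin.init x) - x (Fin.last m) • (y ∘ Fin.rev)) := by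
  rw [mulVec_sub, mulVec_sub, mulVec_smul, toeplitz_transpose_mulVec_comp_rev, hy,
    toeplitz_transpose_mulVec_single_zero, toeplitz_shift_transpose_mulVec]
  ext j
  simp only [Pi.sub_apply, Pi.add_apply, Pi.smul_apply, Function.comp_apply, Fin.val_rev,
    smul_eq_mul]
  have hrev : (((m + 1 - (j + 1) : ℕ) : ℤ) + 1) = m + 1 - ((j : ℕ) : ℤ) := by omega
  rw [hrev]
  ring

end Matrix

theorem Tn_eq_toeplitz (k n : ℕ) (t : ℝ) : Tn k n t = toeplitz (fun j => aCoeff k j t) n := rfl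

/-- Differentiation formula (3.26) of Tracy–Widom: at every `t₀` with
`det T_n(t₀) ≠ 0`, the function `Ũ⁺_n` is differentiable with derivative
`φ(t₀) = 1 - U⁻_n(t₀) Ũ⁻_n(t₀)`, where `Ũ⁺_n(t)` and `Ũ⁻_n(t)` are the first
and last components of `(T_n(t)ᵀ)⁻¹ ã⁺(t)` and `U⁻_n(t)` is the last component
of `T_n(t)⁻¹ a⁺(t)`. -/
theorem deriv_Utilde_plus (k n : ℕ) (hn : 1 ≤ n) (t₀ : ℝ)
    (ht : Matrix.det (Tn k n t₀) ≠ 0) :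
    HasDerivAt (fun t => (((Tn k n t)ᵀ)⁻¹ *ᵥ atplus k n t) ⟨0, by omega⟩)
      (1 - ((Tn k n t₀)⁻¹ *ᵥ aplus k n t₀) ⟨n - 1, by omega⟩ *
        (((Tn k n t₀)ᵀ)⁻¹ *ᵥ atplus k n t₀) ⟨n - 1, by omega⟩) t₀ := by
  obtain ⟨m, rfl⟩ : ∃ m, n = m + 1 := ⟨n - 1, by omega⟩
  have hT (i j : Fin (m + 1)) : HasDerivAt (fun t => (Tn k (m + 1) t)ᵀ i j)
      ((toeplitz (fun j => aCoeff k (j + 1) t₀) (m + 1))ᵀ i j) t₀ :=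
    hasDerivAt_aCoeff k (((j : ℕ) : ℤ) - ((i : ℕ) : ℤ)) t₀
  have hb : HasDerivAt (atplus k (m + 1))
      (fun i : Fin (m + 1) => aCoeff k (-((i : ℕ) : ℤ)) t₀) t₀ :=
    hasDerivAt_pi.2 fun i =>
      (hasDerivAt_aCoeff k (-(((i : ℕ) : ℤ) + 1)) t₀).congr_deriv (by ring_nf)
  have hy : toeplitz (fun j => aCoeff k j t₀) (m + 1) *ᵥ ((Tn k (m + 1) t₀)⁻¹ *ᵥ aplus k (m + 1) t₀)
      = fun i : Fin (m + 1) => aCoeff k (((i : ℕ) : ℤ) + 1) t₀ := by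
    rw [← Tn_eq_toeplitz, mulVec_mulVec, mul_nonsing_inv _ (isUnit_iff_ne_zero.2 ht), one_mulVec]
    rfl
  have hdet : ((Tn k (m + 1) t₀)ᵀ).det ≠ 0 := by rwa [det_transpose]
  have hX := hasDerivAt_inv_mulVec (A := fun t => (Tn k (m + 1) t)ᵀ) hT hb hdet
  have hkey :=
    sub_toeplitz_shift_transpose_mulVec hy (((Tn k (m + 1) t₀)ᵀ)⁻¹ *ᵥ atplus k (m + 1) t₀)
  beta_reduce at hkey
  rw [hkey, ← Tn_eq_toeplitz, mulVec_mulVec,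
    nonsing_inv_mul _ (isUnit_iff_ne_zero.2 hdet), one_mulVec] at hX
  refine (hasDerivAt_pi.1 hX 0).congr_deriv ?_
  simp only [Pi.sub_apply, Pi.smul_apply, Function.comp_apply, Fin.rev_zero, Fin.cons_zero,
    Pi.single_eq_same, smul_eq_mul, sub_zero]
  exact congrArg (1 - ·) (mul_comm _ _)
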